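/- arXiv:1905.01205 — 2 statements merged into one kernel-verified Lean document; each statement's English description precedes it below -/
import Mathlib

section
/- Let σ > 0 and let μ be the Gaussian measure on ℝ with mean 0 and variance σ². Then for every real x and t, the variance of the exact solution of the stochastic advection equation satisfies ∫ sin²(x - ξt) dμ(ξ) - (∫ sin(x - ξt) dμ(ξ))² = (1/2)[1 - cos(2x)·exp(-2σ²t²)] - sin²(x)·exp(-σ²t²). -/
open Real MeasureTheory ProbabilityTheory

namespace StochAdvAux

noncomputable def V (σ : ℝ) : NNReal := ⟨σ ^ 2, sq_nonneg σ⟩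

lemma hV_ne {σ : ℝ} (hσ : 0 < σ) : V σ ≠ 0 := by
  intro h
  exact pow_ne_zero 2 hσ.ne' (congrArg Subtype.val h)

lemma integral_gauss {σ : ℝ} (hσ : 0 < σ) {E : Type*} [NormedAddCommGroup E]
    [NormedSpace ℝ E] (g : ℝ → E) :
    ∫ ξ, g ξ ∂(gaussianReal 0 (V σ)) = ∫ ξ, gaussianPDFReal 0 (V σ) ξ • g ξ := by
  rw [gaussianReal_of_var_ne_zero 0 (hV_ne hσ)]
  have h : gaussianPDF 0 (V σ) = fun ξ => ((gaussianPDFReal 0 (V σ) ξ).toNNReal : ENNReal) := rfl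
  rw [h, integral_withDensity_eq_integral_smul
      ((measurable_gaussianPDFReal 0 (V σ)).real_toNNReal) g]
  congr 1
  ext ξ
  rw [NNReal.smul_def, Real.coe_toNNReal _ (gaussianPDFReal_nonneg 0 (V σ) ξ)]

lemma pdf_eq {σ : ℝ} (hσ : 0 < σ) (ξ : ℝ) :
    gaussianPDFReal 0 (V σ) ξ = (√(2 * π * σ ^ 2))⁻¹ * rexp (-(1 / (2 * σ ^ 2)) * ξ ^ 2) := by
  have hv : ((V σ : NNReal) : ℝ) = σ ^ 2 := rfl
  rw [gaussianPDFReal, hv]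
  congr 1
  rw [sub_zero]
  congr 1
  ring

lemma char_rw {σ : ℝ} (hσ : 0 < σ) (a : ℝ) (ξ : ℝ) :
    gaussianPDFReal 0 (V σ) ξ • Complex.exp (Complex.I * a * ξ)
      = ((√(2 * π * σ ^ 2))⁻¹ : ℝ) •
        Complex.exp (-((1 / (2 * σ ^ 2) : ℝ) : ℂ) * ξ ^ 2 + (Complex.I * a) * ξ + 0) := by
  rw [pdf_eq hσ, Complex.real_smul, Complex.real_smul, Complex.ofReal_mul, Complex.ofReal_exp,
    mul_assoc, ← Complex.exp_add]
  congr 2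
  push_cast
  ring

lemma integrable_char {σ : ℝ} (hσ : 0 < σ) (a : ℝ) :
    Integrable (fun ξ : ℝ => gaussianPDFReal 0 (V σ) ξ • Complex.exp (Complex.I * a * ξ)) := by
  have hb : (0 : ℝ) < 1 / (2 * σ ^ 2) := by positivity
  have h := (integrable_cexp_quadratic (b := ((1 / (2 * σ ^ 2) : ℝ) : ℂ))
      (by simp only [Complex.ofReal_re]; exact hb) (Complex.I * a) 0).smul ((√(2 * π * σ ^ 2))⁻¹ : ℝ)
  exact h.congr (Filter.Eventually.of_forall fun ξ => (char_rw hσ a ξ).symm)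

lemma integral_char {σ : ℝ} (hσ : 0 < σ) (a : ℝ) :
    ∫ ξ : ℝ, gaussianPDFReal 0 (V σ) ξ • Complex.exp (Complex.I * a * ξ)
      = (rexp (-(a ^ 2 * σ ^ 2 / 2)) : ℂ) := by
  have hb : (0 : ℝ) < 1 / (2 * σ ^ 2) := by positivity
  have hσ2 : (σ : ℝ) ^ 2 ≠ 0 := pow_ne_zero 2 hσ.ne'
  have key := fourierIntegral_gaussian (b := ((1 / (2 * σ ^ 2) : ℝ) : ℂ))
      (by simp only [Complex.ofReal_re]; exact hb) (a : ℂ)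
  simp_rw [char_rw hσ a]
  rw [integral_smul]
  have hpt : ∀ ξ : ℝ, Complex.exp (-((1 / (2 * σ ^ 2) : ℝ) : ℂ) * ξ ^ 2 + (Complex.I * a) * ξ + 0)
      = Complex.exp (Complex.I * a * ξ) * Complex.exp (-((1 / (2 * σ ^ 2) : ℝ) : ℂ) * ξ ^ 2) := by
    intro ξ
    rw [← Complex.exp_add]
    congr 1
    ring
  simp_rw [hpt]
  rw [key]
  have h1 : ((π : ℂ) / ((1 / (2 * σ ^ 2) : ℝ) : ℂ)) = ((2 * π * σ ^ 2 : ℝ) : ℂ) := by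
    push_cast
    field_simp
  have hpos : (0 : ℝ) < 2 * π * σ ^ 2 := by positivity
  have h2 : ((2 * π * σ ^ 2 : ℝ) : ℂ) ^ (1 / 2 : ℂ) = ((√(2 * π * σ ^ 2) : ℝ) : ℂ) := by
    rw [show (1 / 2 : ℂ) = ((1 / 2 : ℝ) : ℂ) by norm_num,
      ← Complex.ofReal_cpow hpos.le, ← Real.sqrt_eq_rpow]
  have h3 : -(a : ℂ) ^ 2 / (4 * ((1 / (2 * σ ^ 2) : ℝ) : ℂ)) = ((-(a ^ 2 * σ ^ 2 / 2) : ℝ) : ℂ) := by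
    push_cast
    field_simp
    ring
  rw [h1, h2, h3, Complex.ofReal_exp]
  rw [Complex.real_smul, ← mul_assoc, ← Complex.ofReal_mul,
    inv_mul_cancel₀ (Real.sqrt_ne_zero'.mpr hpos)]
  simp

lemma integral_cos {σ : ℝ} (hσ : 0 < σ) (a : ℝ) :
    ∫ ξ, Real.cos (a * ξ) ∂(gaussianReal 0 (V σ)) = rexp (-(a ^ 2 * σ ^ 2 / 2)) := by
  rw [integral_gauss hσ]
  have h := (Complex.reCLM.integral_comp_comm (integrable_char hσ a)).symm
  simp only [Complex.reCLM_apply] at h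
  have hpt : ∀ ξ : ℝ, gaussianPDFReal 0 (V σ) ξ * Real.cos (a * ξ)
      = (gaussianPDFReal 0 (V σ) ξ • Complex.exp (Complex.I * a * ξ)).re := by
    intro ξ
    rw [Complex.real_smul, Complex.mul_re]
    simp [Complex.exp_re, Complex.exp_im]
  simp_rw [smul_eq_mul, hpt]
  rw [← h, integral_char hσ a]
  exact Complex.ofReal_re _

lemma integral_sin {σ : ℝ} (hσ : 0 < σ) (a : ℝ) :
    ∫ ξ, Real.sin (a * ξ) ∂(gaussianReal 0 (V σ)) = 0 := by
  rw [integral_gauss hσ]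
  have h := (Complex.imCLM.integral_comp_comm (integrable_char hσ a)).symm
  simp only [Complex.imCLM_apply] at h
  have hpt : ∀ ξ : ℝ, gaussianPDFReal 0 (V σ) ξ * Real.sin (a * ξ)
      = (gaussianPDFReal 0 (V σ) ξ • Complex.exp (Complex.I * a * ξ)).im := by
    intro ξ
    rw [Complex.real_smul, Complex.mul_im]
    simp [Complex.exp_re, Complex.exp_im]
  simp_rw [smul_eq_mul, hpt]
  rw [← h, integral_char hσ a]
  exact Complex.ofReal_im _

lemma int_cos {σ : ℝ} (a : ℝ) :
    Integrable (fun ξ => Real.cos (a * ξ)) (gaussianReal 0 (V σ)) := by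
  refine Integrable.mono' (integrable_const 1)
    ((Real.continuous_cos.comp (continuous_const.mul continuous_id)).aestronglyMeasurable)
    (Filter.Eventually.of_forall fun ξ => ?_)
  rw [Real.norm_eq_abs]
  exact Real.abs_cos_le_one _

lemma int_sin {σ : ℝ} (a : ℝ) :
    Integrable (fun ξ => Real.sin (a * ξ)) (gaussianReal 0 (V σ)) := by
  refine Integrable.mono' (integrable_const 1)
    ((Real.continuous_sin.comp (continuous_const.mul continuous_id)).aestronglyMeasurable)
    (Filter.Eventually.of_forall fun ξ => ?_)
  rw [Real.norm_eq_abs]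
  exact Real.abs_sin_le_one _

end StochAdvAux

open StochAdvAux

/-- For ξ ~ N(0, σ²), the variance of the exact advection solution satisfies
`Var[-sin(x - ξ t)] = (1/2)(1 - cos(2x) exp(-2σ²t²)) - sin²(x) exp(-σ²t²)`. -/
theorem stmt_2 (σ : ℝ) (hσ : 0 < σ) (x t : ℝ) :
    (∫ ξ, Real.sin (x - ξ * t) ^ 2 ∂(gaussianReal 0 ⟨σ ^ 2, sq_nonneg σ⟩))
      - (∫ ξ, Real.sin (x - ξ * t) ∂(gaussianReal 0 ⟨σ ^ 2, sq_nonneg σ⟩)) ^ 2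
      = (1 / 2) * (1 - Real.cos (2 * x) * Real.exp (-(2 * σ ^ 2 * t ^ 2)))
        - Real.sin x ^ 2 * Real.exp (-(σ ^ 2 * t ^ 2)) := by
  have hVeq : (⟨σ ^ 2, sq_nonneg σ⟩ : NNReal) = V σ := rfl
  rw [hVeq]
  have hE1 : ∫ ξ, Real.sin (x - ξ * t) ∂(gaussianReal 0 (V σ))
      = Real.sin x * rexp (-(t ^ 2 * σ ^ 2 / 2)) := by
    have hpt : ∀ ξ : ℝ, Real.sin (x - ξ * t)
        = Real.sin x * Real.cos (t * ξ) - Real.cos x * Real.sin (t * ξ) := by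
      intro ξ
      rw [Real.sin_sub, mul_comm ξ t]
    simp_rw [hpt]
    rw [integral_sub ((int_cos t).const_mul _) ((int_sin t).const_mul _),
      integral_const_mul, integral_const_mul, integral_cos hσ t, integral_sin hσ t]
    ring
  have hE2 : ∫ ξ, Real.sin (x - ξ * t) ^ 2 ∂(gaussianReal 0 (V σ))
      = 1 / 2 - Real.cos (2 * x) * rexp (-((2 * t) ^ 2 * σ ^ 2 / 2)) / 2 := by
    have hpt : ∀ ξ : ℝ, Real.sin (x - ξ * t) ^ 2
        = 1 / 2 - (Real.cos (2 * x) * Real.cos ((2 * t) * ξ)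
            + Real.sin (2 * x) * Real.sin ((2 * t) * ξ)) / 2 := by
      intro ξ
      rw [Real.sin_sq_eq_half_sub, show 2 * (x - ξ * t) = 2 * x - (2 * t) * ξ by ring,
        Real.cos_sub]
    simp_rw [hpt]
    have i1 : Integrable (fun ξ : ℝ => Real.cos (2 * x) * Real.cos ((2 * t) * ξ))
        (gaussianReal 0 (V σ)) := (int_cos _).const_mul _
    have i2 : Integrable (fun ξ : ℝ => Real.sin (2 * x) * Real.sin ((2 * t) * ξ))
        (gaussianReal 0 (V σ)) := (int_sin _).const_mul _
    have i3 : Integrable (fun ξ : ℝ => (Real.cos (2 * x) * Real.cos ((2 * t) * ξ)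
        + Real.sin (2 * x) * Real.sin ((2 * t) * ξ)) / 2) (gaussianReal 0 (V σ)) :=
      (i1.add i2).div_const _
    rw [integral_sub (integrable_const _) i3, integral_const, integral_div,
      integral_add i1 i2, integral_const_mul, integral_const_mul,
      integral_cos hσ (2 * t), integral_sin hσ (2 * t)]
    simp
  rw [hE1, hE2]
  have e1 : rexp (-((2 * t) ^ 2 * σ ^ 2 / 2)) = rexp (-(2 * σ ^ 2 * t ^ 2)) := by
    congr 1
    ring
  have e2 : rexp (-(t ^ 2 * σ ^ 2 / 2)) ^ 2 = rexp (-(σ ^ 2 * t ^ 2)) := by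
    rw [sq, ← Real.exp_add]
    congr 1
    ring
  rw [e1, mul_pow, e2]
  ring
end

section
/- Let σ > 0 and let μ be the Gaussian measure on ℝ with mean 0 and variance σ². Then for every real t, the second BO normalizing factor of the advection equation satisfies α₂(t)² = π·∫ (cos(ξt) - exp(-σ²t²/2))² dμ(ξ) = π·(1 - exp(-σ²t²))²/2. -/
open Real MeasureTheory ProbabilityTheory Complex
open scoped NNReal ENNReal

lemma cos_gauss_int {b : ℝ} (hb : 0 < b) (a : ℝ) :
    ∫ x : ℝ, Real.cos (a * x) * Real.exp (-b * x ^ 2)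
      = Real.sqrt (π / b) * Real.exp (-a ^ 2 / (4 * b)) := by
  have h := fourierIntegral_gaussian (b := (b : ℂ)) (by simpa using hb) (a : ℂ)
  have hint : Integrable (fun x : ℝ => cexp (I * a * x) * cexp (-(b:ℂ) * x ^ 2)) := by
    have h2 := integrable_cexp_quadratic (b := (b:ℂ)) (by simpa using hb) (I * a) 0
    refine h2.congr (Filter.Eventually.of_forall fun x => ?_)
    simp only [← Complex.exp_add]
    ring_nf
  have hre := integral_re (𝕜 := ℂ) hint
  simp only [RCLike.re_eq_complex_re] at hre
  rw [h] at hre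
  convert hre using 1
  · congr 1; ext x
    rw [← Complex.exp_add, Complex.exp_re]
    have h1 : (I * a * x + -(b:ℂ) * x ^ 2).re = -b * x ^ 2 := by simp [← Complex.ofReal_pow]
    have h2 : (I * a * x + -(b:ℂ) * x ^ 2).im = a * x := by simp [← Complex.ofReal_pow]
    rw [h1, h2]; ring
  · have hπb : (0:ℝ) ≤ π / b := div_nonneg Real.pi_pos.le hb.le
    have hc : ((π:ℂ) / b) ^ (1 / 2 : ℂ) = ((Real.sqrt (π / b) : ℝ) : ℂ) := by
      rw [show ((π:ℂ) / b) = ((π / b : ℝ) : ℂ) by push_cast; ring,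
        Real.sqrt_eq_rpow, Complex.ofReal_cpow hπb]
      norm_num
    rw [hc, show (-(a:ℂ) ^ 2 / (4 * (b:ℂ))) = ((-a ^ 2 / (4 * b) : ℝ) : ℂ) by push_cast; ring,
      ← Complex.ofReal_exp, ← Complex.ofReal_mul, Complex.ofReal_re]

lemma gauss_int (v : ℝ≥0) (hv : v ≠ 0) (g : ℝ → ℝ) :
    ∫ x, g x ∂(gaussianReal 0 v) = ∫ x, gaussianPDFReal 0 v x * g x := by
  rw [gaussianReal_of_var_ne_zero _ hv]
  have hm : Measurable fun x => (gaussianPDFReal 0 v x).toNNReal :=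
    (measurable_gaussianPDFReal 0 v).real_toNNReal
  have hpdf : gaussianPDF (0:ℝ) v = fun x => ((gaussianPDFReal 0 v x).toNNReal : ℝ≥0∞) := rfl
  rw [hpdf, integral_withDensity_eq_integral_smul hm]
  congr 1; ext x
  rw [NNReal.smul_def, smul_eq_mul, Real.coe_toNNReal _ (gaussianPDFReal_nonneg 0 v x)]

lemma cos_gaussianReal (σ : ℝ) (hσ : 0 < σ) (a : ℝ) :
    ∫ x, Real.cos (a * x) ∂(gaussianReal 0 ⟨σ ^ 2, sq_nonneg σ⟩)
      = Real.exp (-(σ ^ 2 * a ^ 2) / 2) := by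
  have hv : (⟨σ ^ 2, sq_nonneg σ⟩ : ℝ≥0) ≠ 0 := by
    intro h
    have h2 := congrArg NNReal.toReal h
    change σ ^ 2 = 0 at h2
    exact pow_ne_zero 2 hσ.ne' h2
  rw [gauss_int _ hv]
  have hb : 0 < (2 * σ ^ 2)⁻¹ := by positivity
  have key := cos_gauss_int hb a
  have hcoe : ((⟨σ ^ 2, sq_nonneg σ⟩ : ℝ≥0) : ℝ) = σ ^ 2 := rfl
  simp only [gaussianPDFReal, NNReal.coe_mk, sub_zero]
  have : ∀ x : ℝ, (√(2 * π * σ ^ 2))⁻¹ * rexp (-x ^ 2 / (2 * σ ^ 2)) * Real.cos (a * x)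
      = (√(2 * π * σ ^ 2))⁻¹ * (Real.cos (a * x) * rexp (-(2 * σ ^ 2)⁻¹ * x ^ 2)) := by
    intro x
    rw [show -x ^ 2 / (2 * σ ^ 2) = -(2 * σ ^ 2)⁻¹ * x ^ 2 by field_simp]
    ring
  change ∫ x, (√(2 * π * σ ^ 2))⁻¹ * rexp (-x ^ 2 / (2 * σ ^ 2)) * Real.cos (a * x) = _
  simp only [this]
  rw [integral_const_mul, key]
  have h1 : π / (2 * σ ^ 2)⁻¹ = 2 * π * σ ^ 2 := by field_simp
  have h2 : -a ^ 2 / (4 * (2 * σ ^ 2)⁻¹) = -(σ ^ 2 * a ^ 2) / 2 := by field_simp; ring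
  rw [h1, h2, ← mul_assoc, inv_mul_cancel₀ (by positivity), one_mul]

lemma int_cos (v : ℝ≥0) (a : ℝ) :
    Integrable (fun x => Real.cos (a * x)) (gaussianReal 0 v) := by
  refine (integrable_const (1:ℝ)).mono' ?_ ?_
  · exact (Real.continuous_cos.comp (continuous_const.mul continuous_id)).aestronglyMeasurable
  · filter_upwards with x
    simpa using Real.abs_cos_le_one (a * x)


/-- For ξ ~ N(0, σ²), the second BO normalizing factor
`α₂(t) = √(π E[(cos(ξt) - exp(-σ²t²/2))²])` satisfies
`α₂(t)² = π ∫ (cos(ξt) - exp(-σ²t²/2))² dμ(ξ) = π (1 - exp(-σ²t²))²/2`. -/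
theorem stmt_8 (σ : ℝ) (hσ : 0 < σ) (t : ℝ) :
    (Real.sqrt (π * ∫ ξ, (Real.cos (ξ * t) - Real.exp (-(σ ^ 2 * t ^ 2) / 2)) ^ 2
          ∂(gaussianReal 0 ⟨σ ^ 2, sq_nonneg σ⟩))) ^ 2
        = π * ∫ ξ, (Real.cos (ξ * t) - Real.exp (-(σ ^ 2 * t ^ 2) / 2)) ^ 2
            ∂(gaussianReal 0 ⟨σ ^ 2, sq_nonneg σ⟩) ∧
    π * (∫ ξ, (Real.cos (ξ * t) - Real.exp (-(σ ^ 2 * t ^ 2) / 2)) ^ 2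
          ∂(gaussianReal 0 ⟨σ ^ 2, sq_nonneg σ⟩))
        = π * (1 - Real.exp (-(σ ^ 2 * t ^ 2))) ^ 2 / 2 := by
  set v : ℝ≥0 := ⟨σ ^ 2, sq_nonneg σ⟩ with hv
  set c : ℝ := Real.exp (-(σ ^ 2 * t ^ 2) / 2) with hc
  have hpt : ∀ ξ : ℝ, (Real.cos (ξ * t) - c) ^ 2
      = (1 / 2 + c ^ 2) + ((1 / 2) * Real.cos ((2 * t) * ξ) + (-2 * c) * Real.cos (t * ξ)) := by
    intro ξ
    rw [show (2 * t) * ξ = 2 * (ξ * t) by ring, Real.cos_two_mul,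
      show t * ξ = ξ * t by ring]
    ring
  have hIcos : ∀ a : ℝ, Integrable (fun x => Real.cos (a * x)) (gaussianReal 0 v) :=
    fun a => int_cos v a
  have hI2 : Integrable (fun ξ : ℝ => (1 / 2) * Real.cos ((2 * t) * ξ)
      + (-2 * c) * Real.cos (t * ξ)) (gaussianReal 0 v) :=
    ((hIcos (2 * t)).const_mul _).add ((hIcos t).const_mul _)
  have hsplit : ∫ ξ, (Real.cos (ξ * t) - c) ^ 2 ∂(gaussianReal 0 v)
      = (1 / 2 + c ^ 2) + ((1 / 2) * Real.exp (-(σ ^ 2 * (2 * t) ^ 2) / 2)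
        + (-2 * c) * c) := by
    calc ∫ ξ, (Real.cos (ξ * t) - c) ^ 2 ∂(gaussianReal 0 v)
        = ∫ ξ, ((1 / 2 + c ^ 2) + ((1 / 2) * Real.cos ((2 * t) * ξ)
            + (-2 * c) * Real.cos (t * ξ))) ∂(gaussianReal 0 v) := by
          exact integral_congr_ae (Filter.Eventually.of_forall hpt)
      _ = (1 / 2 + c ^ 2) + ((1 / 2) * Real.exp (-(σ ^ 2 * (2 * t) ^ 2) / 2)
            + (-2 * c) * c) := by
          rw [integral_add (integrable_const _) hI2, integral_const,
            integral_add ((hIcos (2 * t)).const_mul _) ((hIcos t).const_mul _),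
            integral_const_mul, integral_const_mul,
            cos_gaussianReal σ hσ (2 * t), cos_gaussianReal σ hσ t, ← hc]
          simp [measure_univ]
  have hval : ∫ ξ, (Real.cos (ξ * t) - c) ^ 2 ∂(gaussianReal 0 v)
      = (1 - Real.exp (-(σ ^ 2 * t ^ 2))) ^ 2 / 2 := by
    rw [hsplit]
    have h1 : c ^ 2 = Real.exp (-(σ ^ 2 * t ^ 2)) := by
      rw [hc, pow_two c, ← Real.exp_add]; congr 1; ring
    have h2 : Real.exp (-(σ ^ 2 * (2 * t) ^ 2) / 2) = Real.exp (-(σ ^ 2 * t ^ 2)) ^ 2 := by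
      rw [pow_two (Real.exp (-(σ ^ 2 * t ^ 2))), ← Real.exp_add]; congr 1; ring
    rw [h2, show (-2 * c) * c = -2 * c ^ 2 by ring, h1]
    ring
  constructor
  · refine Real.sq_sqrt ?_
    exact mul_nonneg Real.pi_pos.le (integral_nonneg fun ξ => sq_nonneg _)
  · rw [hval]; ring
end
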